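/- Adopt the curve setup. Then for every t the differential entropy H(t) = −∫ m_t(a)·log m_t(a) da is finite, the map t ↦ H(t) is differentiable, and for every t₀ ∈ ℝ one has H′(t₀) = −∫ (∂m_t(a)/∂t)|_{t = t₀}·log m_{t₀}(a) da. -/

import Mathlib

/-!
Locally in `t`, with `R` bounding `σ_k`, `σ_k⁻¹`, `μ_k` and the derivatives `μ_k'`, `σ_k'`, `w_k'`,
every component density lies below `R e^{1/2} e^{-a²/(4R²)}`, its log-density and its
`t`-log-derivative are `O(1 + a²)`, and, since `m_t` is a convex combination of the components,
`m_t` and `log m_t` inherit these bounds. Hence `m_t log m_t` and its `t`-derivative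
`∂ₜm_t (log m_t + 1)` are dominated by `(1 + a²)² e^{-a²/(4R²)}`, so the entropy can be
differentiated under the integral sign; the extra term `∫ ∂ₜm_t` vanishes because `∫ m_t = 1`.
-/

open MeasureTheory Real

/-- Gaussian density `φ(a; μ, σ) = (2πσ²)^(−1/2) · exp(−(a−μ)²/(2σ²))`. -/
noncomputable def gpdf (μ σ a : ℝ) : ℝ :=
  (Real.sqrt (2 * Real.pi * σ ^ 2))⁻¹ * Real.exp (-((a - μ) ^ 2) / (2 * σ ^ 2))

/-- Gaussian mixture density along a parameter curve:
`m_t(a) = Σ_k w_k(t) · φ(a; μ_k(t), σ_k(t))`. -/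
noncomputable def mcurve {N : ℕ} (μc σc wc : Fin N → ℝ → ℝ) (t a : ℝ) : ℝ :=
  ∑ k, wc k t * gpdf (μc k t) (σc k t) a

open Filter Topology Metric

theorem integrable_one_add_sq_pow_mul_exp_neg_mul_sq {β : ℝ} (hβ : 0 < β) (n : ℕ) :
    Integrable fun a : ℝ => (1 + a ^ 2) ^ n * exp (-β * a ^ 2) := by
  have hterm (k : ℕ) : Integrable fun a : ℝ => a ^ (2 * k) * exp (-β * a ^ 2) := by
    simpa only [Real.rpow_natCast] using integrable_rpow_mul_exp_neg_mul_sq hβ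
      (s := ((2 * k : ℕ) : ℝ)) (neg_one_lt_zero.trans_le (Nat.cast_nonneg _))
  have hexpand : (fun a : ℝ => (1 + a ^ 2) ^ n * exp (-β * a ^ 2)) = fun a =>
      ∑ k ∈ Finset.range (n + 1), (n.choose k : ℝ) * (a ^ (2 * k) * exp (-β * a ^ 2)) := by
    ext a
    rw [add_comm, add_pow, Finset.sum_mul]
    refine Finset.sum_congr rfl fun k _ => ?_
    rw [one_pow, mul_one, pow_mul]
    ring
  rw [hexpand]
  exact integrable_finsetSum _ fun k _ => (hterm k).const_mul _

theorem abs_log_le_iff {x L : ℝ} (hx : 0 < x) :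
    |log x| ≤ L ↔ x ∈ Set.Icc (exp (-L)) (exp L) := by
  rw [abs_le, Set.mem_Icc, Real.le_log_iff_exp_le hx, Real.log_le_iff_le_exp hx]

section EntropyDerivative

variable {f φ g : ℝ → ℝ} {A : ℝ}

theorem le_one_add_sq_sq_mul {x : ℝ} (hx : 0 ≤ x) (a : ℝ) : x ≤ (1 + a ^ 2) ^ 2 * x :=
  le_mul_of_one_le_left hx (one_le_pow₀ (by nlinarith))

theorem one_add_sq_mul_le {x : ℝ} (hx : 0 ≤ x) (a : ℝ) : (1 + a ^ 2) * x ≤ (1 + a ^ 2) ^ 2 * x :=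
  mul_le_mul_of_nonneg_right (le_self_pow₀ (by nlinarith) two_ne_zero) hx

theorem abs_mul_log_le (hf : ∀ a, 0 < f a) (hfg : ∀ a, f a ≤ g a)
    (hlog : ∀ a, |log (f a)| ≤ A * (1 + a ^ 2)) (a : ℝ) :
    |f a * log (f a)| ≤ A * ((1 + a ^ 2) ^ 2 * g a) := by
  have hA : 0 ≤ A := nonneg_of_mul_nonneg_left ((abs_nonneg _).trans (hlog a)) (by positivity)
  have hg : 0 ≤ g a := (hf a).le.trans (hfg a)
  rw [abs_mul, abs_of_pos (hf a)]
  calc f a * |log (f a)| ≤ g a * (A * (1 + a ^ 2)) :=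
        mul_le_mul (hfg a) (hlog a) (abs_nonneg _) hg
    _ = A * ((1 + a ^ 2) * g a) := by ring
    _ ≤ A * ((1 + a ^ 2) ^ 2 * g a) := mul_le_mul_of_nonneg_left (one_add_sq_mul_le hg a) hA

theorem abs_mul_log_add_le {c : ℝ} (hφ : ∀ a, |φ a| ≤ (1 + a ^ 2) * g a)
    (hlog : ∀ a, |log (f a)| ≤ A * (1 + a ^ 2)) (hc : |c| ≤ 1) (a : ℝ) :
    |φ a * (log (f a) + c)| ≤ (A + 1) * ((1 + a ^ 2) ^ 2 * g a) := by
  have hg : 0 ≤ g a := nonneg_of_mul_nonneg_right ((abs_nonneg _).trans (hφ a)) (by positivity)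
  rw [abs_mul]
  calc |φ a| * |log (f a) + c| ≤ (1 + a ^ 2) * g a * (A * (1 + a ^ 2) + 1) :=
        mul_le_mul (hφ a) ((abs_add_le _ _).trans (add_le_add (hlog a) hc)) (abs_nonneg _)
          (by positivity)
    _ ≤ (A + 1) * ((1 + a ^ 2) ^ 2 * g a) := by
        have : 0 ≤ g a * (1 + a ^ 2) * a ^ 2 := by positivity
        nlinarith

theorem integrable_mul_log (hf_meas : AEStronglyMeasurable f) (hf : ∀ a, 0 < f a)
    (hfg : ∀ a, f a ≤ g a) (hlog : ∀ a, |log (f a)| ≤ A * (1 + a ^ 2))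
    (hg : Integrable fun a => (1 + a ^ 2) ^ 2 * g a) :
    Integrable fun a => f a * log (f a) :=
  (hg.const_mul A).mono' (hf_meas.mul hf_meas.aemeasurable.log.aestronglyMeasurable)
    (.of_forall fun a => abs_mul_log_le hf hfg hlog a)

variable {F F' : ℝ → ℝ → ℝ} {s : Set ℝ} {t₀ c : ℝ}

theorem integral_deriv_eq_zero_of_integral_const (hs : s ∈ 𝓝 t₀)
    (hF_meas : ∀ t ∈ s, AEStronglyMeasurable (F t))
    (hF_int : Integrable (F t₀)) (hF'_meas : AEStronglyMeasurable (F' t₀))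
    (hF : ∀ t ∈ s, ∀ a, HasDerivAt (F · a) (F' t a) t) (hF'_le : ∀ t ∈ s, ∀ a, |F' t a| ≤ g a)
    (hg : Integrable g) (hF_mass : ∀ t ∈ s, ∫ a, F t a = c) :
    Integrable (F' t₀) ∧ ∫ a, F' t₀ a = 0 := by
  obtain ⟨hF'_int, hmass⟩ := hasDerivAt_integral_of_dominated_loc_of_deriv_le hs
    (eventually_of_mem hs hF_meas) hF_int hF'_meas (.of_forall fun a t ht => hF'_le t ht a) hg
    (.of_forall fun a t ht => hF t ht a)
  exact ⟨hF'_int, hmass.unique <| (hasDerivAt_const t₀ c).congr_of_eventuallyEq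
    (eventually_of_mem hs hF_mass)⟩

theorem hasDerivAt_integral_mul_log (hs : s ∈ 𝓝 t₀)
    (hF_meas : ∀ t ∈ s, AEStronglyMeasurable (F t)) (hF'_meas : AEStronglyMeasurable (F' t₀))
    (hF : ∀ t ∈ s, ∀ a, HasDerivAt (F · a) (F' t a) t) (hF_pos : ∀ t ∈ s, ∀ a, 0 < F t a)
    (hF_le : ∀ t ∈ s, ∀ a, F t a ≤ g a) (hF'_le : ∀ t ∈ s, ∀ a, |F' t a| ≤ (1 + a ^ 2) * g a)
    (hlog : ∀ t ∈ s, ∀ a, |log (F t a)| ≤ A * (1 + a ^ 2))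
    (hg : Integrable fun a => (1 + a ^ 2) ^ 2 * g a) (hF_mass : ∀ t ∈ s, ∫ a, F t a = c) :
    HasDerivAt (fun t => ∫ a, F t a * log (F t a)) (∫ a, F' t₀ a * log (F t₀ a)) t₀ := by
  have ht₀ : t₀ ∈ s := mem_of_mem_nhds hs
  have hlog_meas : AEStronglyMeasurable fun a => log (F t₀ a) :=
    (hF_meas t₀ ht₀).aemeasurable.log.aestronglyMeasurable
  have hg_nonneg a : 0 ≤ g a := (hF_pos t₀ ht₀ a).le.trans (hF_le t₀ ht₀ a)
  have hF_int : Integrable (F t₀) := hg.mono' (hF_meas t₀ ht₀) (.of_forall fun a => by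
    rw [norm_of_nonneg (hF_pos t₀ ht₀ a).le]
    exact (hF_le t₀ ht₀ a).trans (le_one_add_sq_sq_mul (hg_nonneg a) a))
  obtain ⟨hF'_int, hF'_zero⟩ :=
    integral_deriv_eq_zero_of_integral_const hs hF_meas hF_int hF'_meas hF
    (fun t ht a => (hF'_le t ht a).trans (one_add_sq_mul_le (hg_nonneg a) a)) hg hF_mass
  have hentropy := hasDerivAt_integral_of_dominated_loc_of_deriv_le
    (F := fun t a => F t a * log (F t a)) hs
    (eventually_of_mem hs fun t ht =>
      (hF_meas t ht).mul (hF_meas t ht).aemeasurable.log.aestronglyMeasurable)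
    (integrable_mul_log (hF_meas t₀ ht₀) (hF_pos t₀ ht₀) (hF_le t₀ ht₀) (hlog t₀ ht₀) hg)
    (hF'_meas.mul (hlog_meas.add aestronglyMeasurable_const))
    (.of_forall fun a t ht => abs_mul_log_add_le (hF'_le t ht) (hlog t ht) abs_one.le a)
    (hg.const_mul (A + 1))
    (.of_forall fun a t ht => by
      have hFa := hF t ht a
      refine (hFa.mul (hFa.log (hF_pos t ht a).ne')).congr_deriv ?_
      field_simp [(hF_pos t ht a).ne'])
  have hF'_log_int : Integrable fun a => F' t₀ a * log (F t₀ a) :=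
    (hg.const_mul (A + 1)).mono' (hF'_meas.mul hlog_meas) (.of_forall fun a => by
      simpa using abs_mul_log_add_le (hF'_le t₀ ht₀) (hlog t₀ ht₀) (c := 0) (by simp) a)
  have hsplit : ∫ a, F' t₀ a * (log (F t₀ a) + 1) = ∫ a, F' t₀ a * log (F t₀ a) := by
    simp_rw [mul_add, mul_one]
    rw [integral_add hF'_log_int hF'_int, hF'_zero, add_zero]
  exact hsplit ▸ hentropy.2

end EntropyDerivative

/-- The `t`-derivative of `log φ(a; μ(t), σ(t))` when `μ' = μ'(t)` and `σ' = σ'(t)`. -/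
noncomputable def gpdfScore (μ σ μ' σ' a : ℝ) : ℝ :=
  (μ' * ((a - μ) / σ) + σ' * (((a - μ) / σ) ^ 2 - 1)) / σ

section Gaussian

theorem gpdf_eq_gaussianPDFReal (μ σ : ℝ) :
    gpdf μ σ = ProbabilityTheory.gaussianPDFReal μ (σ ^ 2).toNNReal := by
  ext a
  simp [gpdf, ProbabilityTheory.gaussianPDFReal, Real.coe_toNNReal _ (sq_nonneg σ)]

theorem integrable_gpdf (μ σ : ℝ) : Integrable (gpdf μ σ) := by
  rw [gpdf_eq_gaussianPDFReal]
  exact ProbabilityTheory.integrable_gaussianPDFReal _ _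

theorem integral_gpdf (μ : ℝ) {σ : ℝ} (hσ : σ ≠ 0) : ∫ a, gpdf μ σ a = 1 := by
  rw [gpdf_eq_gaussianPDFReal]
  exact ProbabilityTheory.integral_gaussianPDFReal_eq_one μ (by simpa [Real.toNNReal_eq_zero])

theorem continuous_gpdf (μ σ : ℝ) : Continuous (gpdf μ σ) := by
  unfold gpdf
  fun_prop

theorem gpdf_nonneg (μ σ a : ℝ) : 0 ≤ gpdf μ σ a := by
  unfold gpdf
  positivity

theorem gpdf_eq_of_pos (μ : ℝ) {σ : ℝ} (hσ : 0 < σ) (a : ℝ) :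
    gpdf μ σ a = (√(2 * π) * σ)⁻¹ * exp (-((a - μ) / σ) ^ 2 / 2) := by
  rw [gpdf, Real.sqrt_mul (by positivity), Real.sqrt_sq hσ.le]
  congr 2
  field_simp

theorem gpdf_pos (μ : ℝ) {σ : ℝ} (hσ : 0 < σ) (a : ℝ) : 0 < gpdf μ σ a := by
  rw [gpdf_eq_of_pos μ hσ]
  positivity

theorem log_gpdf (μ : ℝ) {σ : ℝ} (hσ : 0 < σ) (a : ℝ) :
    log (gpdf μ σ a) = -log (√(2 * π) * σ) - ((a - μ) / σ) ^ 2 / 2 := by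
  rw [gpdf_eq_of_pos μ hσ, log_mul (by positivity) (exp_pos _).ne', log_inv, log_exp]
  ring

theorem hasDerivAt_gpdf_comp {f g : ℝ → ℝ} {t f' g' : ℝ} (hf : HasDerivAt f f' t)
    (hg : HasDerivAt g g' t) (ht : 0 < g t) (a : ℝ) :
    HasDerivAt (fun u => gpdf (f u) (g u) a)
      (gpdf (f t) (g t) a * gpdfScore (f t) (g t) f' g' a) t := by
  have hpos : ∀ᶠ u in 𝓝 t, 0 < g u := hg.continuousAt.eventually (lt_mem_nhds ht)
  have heq : (fun u => gpdf (f u) (g u) a) =ᶠ[𝓝 t]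
      fun u => (√(2 * π))⁻¹ * ((g u)⁻¹ * exp (-((a - f u) / g u) ^ 2 / 2)) :=
    hpos.mono fun u hu => by dsimp only; rw [gpdf_eq_of_pos _ hu, mul_inv, mul_assoc]
  refine HasDerivAt.congr_of_eventuallyEq ?_ heq
  have hz : HasDerivAt (fun u => (a - f u) / g u) ((-f' * g t - (a - f t) * g') / g t ^ 2) t :=
    (hf.const_sub a).fun_div hg ht.ne' |>.congr_deriv (by ring)
  have := ((hg.fun_inv ht.ne').fun_mul ((hz.fun_pow 2).fun_neg.div_const 2).exp).const_mul
    (√(2 * π))⁻¹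
  refine this.congr_deriv ?_
  rw [gpdf_eq_of_pos _ ht, gpdfScore]
  have hne := ht.ne'
  simp only [Nat.cast_ofNat, Nat.add_one_sub_one, pow_one]
  field_simp
  ring

variable {μ σ R : ℝ}

theorem one_le_of_le_of_inv_le (hσ : 0 < σ) (hσR : σ ≤ R) (hσR' : σ⁻¹ ≤ R) : 1 ≤ R := by
  rcases le_total σ 1 with h | h
  · exact ((one_le_inv₀ hσ).2 h).trans hσR'
  · exact h.trans hσR

theorem one_add_sq_div_le (hσ : 0 < σ) (hσR' : σ⁻¹ ≤ R) (hμR : |μ| ≤ R) (a : ℝ) :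
    1 + ((a - μ) / σ) ^ 2 ≤ (1 + 2 * R ^ 4) * (1 + a ^ 2) := by
  have hσ2 : (σ⁻¹) ^ 2 ≤ R ^ 2 := pow_le_pow_left₀ (inv_nonneg.2 hσ.le) hσR' 2
  have hμ2 : μ ^ 2 ≤ R ^ 2 := sq_le_sq' (abs_le.1 hμR).1 (abs_le.1 hμR).2
  have hsq : (a - μ) ^ 2 ≤ 2 * (a ^ 2 + R ^ 2) := by nlinarith [sq_nonneg (a + μ)]
  have : ((a - μ) / σ) ^ 2 ≤ 2 * (a ^ 2 + R ^ 2) * R ^ 2 := by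
    rw [div_eq_mul_inv, mul_pow]
    exact mul_le_mul hsq hσ2 (sq_nonneg _) (by positivity)
  nlinarith [sq_nonneg (R ^ 2 - 1), sq_nonneg a, mul_nonneg (sq_nonneg a) (sq_nonneg (R ^ 2 - 1))]

theorem gpdf_le (hσ : 0 < σ) (hσR : σ ≤ R) (hσR' : σ⁻¹ ≤ R) (hμR : |μ| ≤ R) (a : ℝ) :
    gpdf μ σ a ≤ R * exp (1 / 2) * exp (-(4 * R ^ 2)⁻¹ * a ^ 2) := by
  have hR : 0 < R := hσ.trans_le hσR
  have hμ2 : μ ^ 2 ≤ R ^ 2 := sq_le_sq' (abs_le.1 hμR).1 (abs_le.1 hμR).2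
  have hprefactor : (√(2 * π) * σ)⁻¹ ≤ R := by
    refine le_trans ?_ hσR'
    rw [mul_inv]
    refine mul_le_of_le_one_left (by positivity) (inv_le_one_of_one_le₀ ?_)
    exact Real.one_le_sqrt.2 (by nlinarith [Real.pi_gt_three])
  have hexponent : -((a - μ) / σ) ^ 2 / 2 ≤ 1 / 2 + -(4 * R ^ 2)⁻¹ * a ^ 2 := by
    have hσ2 : σ ^ 2 ≤ R ^ 2 := pow_le_pow_left₀ hσ.le hσR 2
    -- `(a - μ)² ≥ a²/2 - μ²`
    have : (a ^ 2 - 2 * R ^ 2) / (2 * R ^ 2) ≤ ((a - μ) / σ) ^ 2 := by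
      rw [div_pow, div_le_div_iff₀ (by positivity) (by positivity)]
      nlinarith [sq_nonneg (a - 2 * μ), sq_nonneg a, mul_le_mul_of_nonneg_left hσ2 (sq_nonneg a)]
    have e : (a ^ 2 - 2 * R ^ 2) / (2 * R ^ 2) = a ^ 2 / (2 * R ^ 2) - 1 := by
      field_simp
    have e2 : -(4 * R ^ 2)⁻¹ * a ^ 2 = -(a ^ 2 / (2 * R ^ 2)) / 2 := by
      field_simp
      ring
    rw [e] at this
    rw [e2]
    linarith
  rw [gpdf_eq_of_pos μ hσ, mul_assoc, ← exp_add]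
  exact mul_le_mul hprefactor (exp_le_exp.2 hexponent) (exp_pos _).le hR.le

theorem abs_log_gpdf_le (hσ : 0 < σ) (hσR : σ ≤ R) (hσR' : σ⁻¹ ≤ R) (hμR : |μ| ≤ R) (a : ℝ) :
    |log (gpdf μ σ a)| ≤ 3 * R * (1 + 2 * R ^ 4) * (1 + a ^ 2) := by
  have hR1 := one_le_of_le_of_inv_le hσ hσR hσR'
  have hc : 0 < √(2 * π) * σ := by positivity
  have hsqrt1 : 1 ≤ √(2 * π) := Real.one_le_sqrt.2 (by nlinarith [Real.pi_gt_three])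
  have hsqrt3 : √(2 * π) ≤ 3 := Real.sqrt_le_iff.2 ⟨by norm_num, by nlinarith [Real.pi_lt_four]⟩
  have hlogc : |log (√(2 * π) * σ)| ≤ 3 * R := by
    rw [abs_le]
    constructor
    · rw [neg_le, ← log_inv]
      calc log (√(2 * π) * σ)⁻¹ ≤ (√(2 * π) * σ)⁻¹ := log_le_self (by positivity)
        _ ≤ σ⁻¹ := by
            rw [mul_inv]
            exact mul_le_of_le_one_left (by positivity) (inv_le_one_of_one_le₀ hsqrt1)
        _ ≤ 3 * R := by linarith
    · calc log (√(2 * π) * σ) ≤ √(2 * π) * σ := log_le_self hc.le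
        _ ≤ 3 * R := mul_le_mul hsqrt3 hσR hσ.le (by norm_num)
  rw [log_gpdf μ hσ]
  calc |-log (√(2 * π) * σ) - ((a - μ) / σ) ^ 2 / 2|
      ≤ 3 * R + ((a - μ) / σ) ^ 2 / 2 :=
        (abs_sub _ _).trans (add_le_add (by rwa [abs_neg]) (abs_of_nonneg (by positivity)).le)
    _ ≤ 3 * R * (1 + ((a - μ) / σ) ^ 2) := by nlinarith [sq_nonneg ((a - μ) / σ)]
    _ ≤ 3 * R * ((1 + 2 * R ^ 4) * (1 + a ^ 2)) :=
        mul_le_mul_of_nonneg_left (one_add_sq_div_le hσ hσR' hμR a) (by positivity)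
    _ = 3 * R * (1 + 2 * R ^ 4) * (1 + a ^ 2) := by ring

theorem abs_gpdfScore_le {μ' σ' : ℝ} (hσ : 0 < σ) (hσR' : σ⁻¹ ≤ R) (hμR : |μ| ≤ R)
    (hμ'R : |μ'| ≤ R) (hσ'R : |σ'| ≤ R) (a : ℝ) :
    |gpdfScore μ σ μ' σ' a| ≤ 2 * R ^ 2 * (1 + 2 * R ^ 4) * (1 + a ^ 2) := by
  set z := (a - μ) / σ
  have hR : 0 ≤ R := (abs_nonneg _).trans hμR
  have hz : |z| ≤ 1 + z ^ 2 := by nlinarith [sq_abs z, abs_nonneg z, sq_nonneg (|z| - 1)]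
  have hnum : |μ' * z + σ' * (z ^ 2 - 1)| ≤ 2 * R * (1 + z ^ 2) := by
    calc |μ' * z + σ' * (z ^ 2 - 1)| ≤ |μ'| * |z| + |σ'| * (1 + z ^ 2) := by
          refine (abs_add_le _ _).trans ?_
          rw [abs_mul, abs_mul]
          gcongr
          exact (abs_sub _ _).trans (by rw [abs_one, abs_of_nonneg (sq_nonneg z), add_comm])
      _ ≤ R * (1 + z ^ 2) + R * (1 + z ^ 2) := by gcongr
      _ = 2 * R * (1 + z ^ 2) := by ring
  rw [gpdfScore, div_eq_mul_inv, abs_mul, abs_of_pos (inv_pos.2 hσ)]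
  calc |μ' * z + σ' * (z ^ 2 - 1)| * σ⁻¹ ≤ 2 * R * (1 + z ^ 2) * R :=
        mul_le_mul hnum hσR' (by positivity) (by positivity)
    _ = 2 * R ^ 2 * (1 + z ^ 2) := by ring
    _ ≤ 2 * R ^ 2 * ((1 + 2 * R ^ 4) * (1 + a ^ 2)) :=
        mul_le_mul_of_nonneg_left (one_add_sq_div_le hσ hσR' hμR a) (by positivity)
    _ = 2 * R ^ 2 * (1 + 2 * R ^ 4) * (1 + a ^ 2) := by ring

theorem abs_add_mul_gpdfScore_le {w w' μ' σ' : ℝ} (hw0 : 0 ≤ w) (hw1 : w ≤ 1) (hσ : 0 < σ)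
    (hσR' : σ⁻¹ ≤ R) (hμR : |μ| ≤ R) (hμ'R : |μ'| ≤ R) (hσ'R : |σ'| ≤ R) (hw'R : |w'| ≤ R)
    (a : ℝ) :
    |w' + w * gpdfScore μ σ μ' σ' a| ≤ (R + 2 * R ^ 2 * (1 + 2 * R ^ 4)) * (1 + a ^ 2) := by
  calc _ ≤ R + 1 * (2 * R ^ 2 * (1 + 2 * R ^ 4) * (1 + a ^ 2)) := by
        refine (abs_add_le _ _).trans (add_le_add hw'R ?_)
        rw [abs_mul, abs_of_nonneg hw0]
        exact mul_le_mul hw1 (abs_gpdfScore_le hσ hσR' hμR hμ'R hσ'R a) (abs_nonneg _) zero_le_one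
    _ ≤ (R + 2 * R ^ 2 * (1 + 2 * R ^ 4)) * (1 + a ^ 2) := by
        have : 0 ≤ R := (abs_nonneg _).trans hμR
        nlinarith [sq_nonneg a, mul_nonneg this (sq_nonneg a)]

end Gaussian

theorem IsCompact.exists_bound_of_continuousOn_family {X ι : Type*} [TopologicalSpace X]
    [Finite ι] {K : Set X} (hK : IsCompact K) {f : ι → X → ℝ} (hf : ∀ i, ContinuousOn (f i) K) :
    ∃ R, ∀ i, ∀ x ∈ K, |f i x| ≤ R := by
  have := Fintype.ofFinite ι
  obtain ⟨R, hR⟩ := hK.exists_bound_of_continuousOn (continuousOn_pi.2 hf)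
  exact ⟨R, fun i x hx => (norm_le_pi_norm (fun i => f i x) i).trans (hR x hx)⟩

noncomputable def mcurveDeriv {N : ℕ} (μc σc wc : Fin N → ℝ → ℝ) (t a : ℝ) : ℝ :=
  ∑ k, (deriv (wc k) t
      + wc k t * gpdfScore (μc k t) (σc k t) (deriv (μc k) t) (deriv (σc k) t) a)
    * gpdf (μc k t) (σc k t) a

section Mixture

variable {N : ℕ} {μc σc wc : Fin N → ℝ → ℝ} {t : ℝ}

theorem mcurve_mem_of_forall_mem {I : Set ℝ} (hI : Convex ℝ I) (hw : ∀ k, 0 ≤ wc k t)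
    (hwsum : ∑ k, wc k t = 1) {a : ℝ} (h : ∀ k, gpdf (μc k t) (σc k t) a ∈ I) :
    mcurve μc σc wc t a ∈ I :=
  hI.sum_mem (fun k _ => hw k) hwsum fun k _ => h k

theorem mcurve_pos (hσ : ∀ k, 0 < σc k t) (hw : ∀ k, 0 ≤ wc k t) (hwsum : ∑ k, wc k t = 1)
    (a : ℝ) : 0 < mcurve μc σc wc t a :=
  mcurve_mem_of_forall_mem (convex_Ioi 0) hw hwsum fun k => gpdf_pos _ (hσ k) a

theorem integral_mcurve (hσ : ∀ k, σc k t ≠ 0) (hwsum : ∑ k, wc k t = 1) :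
    ∫ a, mcurve μc σc wc t a = 1 := by
  unfold mcurve
  rw [integral_finsetSum _ fun k _ => (integrable_gpdf _ _).const_mul _]
  simp_rw [integral_const_mul, integral_gpdf _ (hσ _), mul_one]
  exact hwsum

theorem continuous_mcurve : Continuous (mcurve μc σc wc t) := by
  unfold mcurve
  have := continuous_gpdf
  fun_prop

theorem continuous_mcurveDeriv : Continuous (mcurveDeriv μc σc wc t) := by
  unfold mcurveDeriv gpdfScore
  have := continuous_gpdf
  fun_prop

theorem hasDerivAt_mcurve (hμ : ∀ k, DifferentiableAt ℝ (μc k) t)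
    (hσ : ∀ k, DifferentiableAt ℝ (σc k) t) (hw : ∀ k, DifferentiableAt ℝ (wc k) t)
    (hσpos : ∀ k, 0 < σc k t) (a : ℝ) :
    HasDerivAt (mcurve μc σc wc · a) (mcurveDeriv μc σc wc t a) t := by
  unfold mcurve mcurveDeriv
  refine HasDerivAt.fun_sum fun k _ => ?_
  refine ((hw k).hasDerivAt.fun_mul
    (hasDerivAt_gpdf_comp (hμ k).hasDerivAt (hσ k).hasDerivAt (hσpos k) a)).congr_deriv ?_
  ring

theorem abs_mcurveDeriv_le {a B G : ℝ}
    (hB : ∀ k, |deriv (wc k) t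
      + wc k t * gpdfScore (μc k t) (σc k t) (deriv (μc k) t) (deriv (σc k) t) a| ≤ B)
    (hG : ∀ k, gpdf (μc k t) (σc k t) a ≤ G) :
    |mcurveDeriv μc σc wc t a| ≤ N * B * G := by
  unfold mcurveDeriv
  refine (Finset.abs_sum_le_sum_abs _ _).trans ?_
  calc _ ≤ ∑ _k : Fin N, B * G := Finset.sum_le_sum fun k _ => by
        rw [abs_mul, abs_of_nonneg (gpdf_nonneg _ _ _)]
        exact mul_le_mul (hB k) (hG k) (gpdf_nonneg _ _ _) ((abs_nonneg _).trans (hB k))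
    _ = N * B * G := by simp [mul_assoc]

theorem exists_parameter_bound (hμ : ∀ k, ContDiff ℝ 1 (μc k)) (hσ : ∀ k, ContDiff ℝ 1 (σc k))
    (hw : ∀ k, ContDiff ℝ 1 (wc k)) (hσpos : ∀ k t, 0 < σc k t) {K : Set ℝ} (hK : IsCompact K) :
    ∃ R, 1 ≤ R ∧ (∀ k, ∀ t ∈ K, σc k t ≤ R) ∧ (∀ k, ∀ t ∈ K, (σc k t)⁻¹ ≤ R) ∧
      (∀ k, ∀ t ∈ K, |μc k t| ≤ R) ∧ (∀ k, ∀ t ∈ K, |deriv (μc k) t| ≤ R) ∧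
      (∀ k, ∀ t ∈ K, |deriv (σc k) t| ≤ R) ∧ ∀ k, ∀ t ∈ K, |deriv (wc k) t| ≤ R := by
  obtain ⟨R, hR⟩ := hK.exists_bound_of_continuousOn_family
    (f := Sum.elim σc <| Sum.elim (fun k t => (σc k t)⁻¹) <| Sum.elim μc <|
      Sum.elim (fun k => deriv (μc k)) <| Sum.elim (fun k => deriv (σc k)) fun k => deriv (wc k))
    (by
      rintro (k | k | k | k | k | k)
      · exact (hσ k).continuous.continuousOn
      · exact ((hσ k).continuous.inv₀ fun t => (hσpos k t).ne').continuousOn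
      · exact (hμ k).continuous.continuousOn
      · exact ((hμ k).continuous_deriv le_rfl).continuousOn
      · exact ((hσ k).continuous_deriv le_rfl).continuousOn
      · exact ((hw k).continuous_deriv le_rfl).continuousOn)
  have hle {x : ℝ} (h : |x| ≤ R) : |x| ≤ max R 1 := h.trans (le_max_left _ _)
  exact ⟨max R 1, le_max_right _ _, fun k t ht => (le_abs_self _).trans (hle (hR (.inl k) t ht)),
    fun k t ht => (le_abs_self _).trans (hle (hR (.inr (.inl k)) t ht)),
    fun k t ht => hle (hR (.inr (.inr (.inl k))) t ht),
    fun k t ht => hle (hR (.inr (.inr (.inr (.inl k)))) t ht),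
    fun k t ht => hle (hR (.inr (.inr (.inr (.inr (.inl k))))) t ht),
    fun k t ht => hle (hR (.inr (.inr (.inr (.inr (.inr k))))) t ht)⟩

theorem exists_envelope_mcurve (hμ : ∀ k, ContDiff ℝ 1 (μc k)) (hσ : ∀ k, ContDiff ℝ 1 (σc k))
    (hw : ∀ k, ContDiff ℝ 1 (wc k)) (hσpos : ∀ k t, 0 < σc k t) (hwpos : ∀ k t, 0 < wc k t)
    (hwsum : ∀ t, ∑ k, wc k t = 1) (t₀ : ℝ) :
    ∃ (g : ℝ → ℝ) (A : ℝ), Integrable (fun a => (1 + a ^ 2) ^ 2 * g a) ∧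
      (∀ t ∈ closedBall t₀ 1, ∀ a, mcurve μc σc wc t a ≤ g a) ∧
      (∀ t ∈ closedBall t₀ 1, ∀ a, |mcurveDeriv μc σc wc t a| ≤ (1 + a ^ 2) * g a) ∧
      ∀ t ∈ closedBall t₀ 1, ∀ a, |log (mcurve μc σc wc t a)| ≤ A * (1 + a ^ 2) := by
  obtain ⟨R, hR1, hσR, hσR', hμR, hμ'R, hσ'R, hw'R⟩ :=
    exists_parameter_bound hμ hσ hw hσpos (isCompact_closedBall t₀ 1)
  set D := 2 * R ^ 2 * (1 + 2 * R ^ 4)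
  set G := fun a : ℝ => R * exp (1 / 2) * exp (-(4 * R ^ 2)⁻¹ * a ^ 2)
  have hG a : 0 ≤ G a := by positivity
  have hK : 1 ≤ 1 + N * (R + D) := le_add_of_nonneg_right (by positivity)
  have hw0 k t : 0 ≤ wc k t := (hwpos k t).le
  have hφG k t (ht : t ∈ closedBall t₀ 1) a : gpdf (μc k t) (σc k t) a ≤ G a :=
    gpdf_le (hσpos k t) (hσR k t ht) (hσR' k t ht) (hμR k t ht) a
  refine ⟨fun a => (1 + N * (R + D)) * G a, 3 * R * (1 + 2 * R ^ 4), ?_,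
    fun t ht a => ?_, fun t ht a => ?_, fun t ht a => ?_⟩
  · refine ((integrable_one_add_sq_pow_mul_exp_neg_mul_sq
      (β := (4 * R ^ 2)⁻¹) (by positivity) 2).const_mul
      ((1 + N * (R + D)) * R * exp (1 / 2))).congr (.of_forall fun a => ?_)
    simp only [G]
    ring
  · exact (mcurve_mem_of_forall_mem (convex_Iic (G a)) (hw0 · t) (hwsum t)
      fun k => hφG k t ht a).trans (le_mul_of_one_le_left (hG a) hK)
  · have hcoeff k := abs_add_mul_gpdfScore_le (hw0 k t)
      ((Finset.single_le_sum (fun j _ => hw0 j t) (Finset.mem_univ k)).trans (hwsum t).le)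
      (hσpos k t) (hσR' k t ht) (hμR k t ht) (hμ'R k t ht) (hσ'R k t ht) (hw'R k t ht) a
    refine (abs_mcurveDeriv_le hcoeff fun k => hφG k t ht a).trans ?_
    have : 0 ≤ G a * (1 + a ^ 2) := by positivity
    nlinarith
  · rw [abs_log_le_iff (mcurve_pos (fun k => hσpos k t) (hw0 · t) (hwsum t) a)]
    refine mcurve_mem_of_forall_mem (convex_Icc _ _) (hw0 · t) (hwsum t) fun k => ?_
    rw [← abs_log_le_iff (gpdf_pos _ (hσpos k t) a)]
    exact abs_log_gpdf_le (hσpos k t) (hσR k t ht) (hσR' k t ht) (hμR k t ht) a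

end Mixture

theorem stmt9_general (N : ℕ) (μc σc wc : Fin N → ℝ → ℝ)
    (hμ : ∀ k, ContDiff ℝ 1 (μc k)) (hσ : ∀ k, ContDiff ℝ 1 (σc k))
    (hw : ∀ k, ContDiff ℝ 1 (wc k))
    (hσpos : ∀ k t, 0 < σc k t) (hwpos : ∀ k t, 0 < wc k t)
    (hwsum : ∀ t, (∑ k, wc k t) = 1) :
    (∀ t : ℝ, Integrable (fun a => mcurve μc σc wc t a * Real.log (mcurve μc σc wc t a))) ∧
    Differentiable ℝ (fun t => -∫ a, mcurve μc σc wc t a * Real.log (mcurve μc σc wc t a)) ∧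
    ∀ t₀ : ℝ,
      deriv (fun t => -∫ a, mcurve μc σc wc t a * Real.log (mcurve μc σc wc t a)) t₀
        = -∫ a, deriv (fun t => mcurve μc σc wc t a) t₀ * Real.log (mcurve μc σc wc t₀ a) := by
  have hpos t : ∀ a, 0 < mcurve μc σc wc t a :=
    mcurve_pos (fun k => hσpos k t) (fun k => (hwpos k t).le) (hwsum t)
  have hderiv t a : HasDerivAt (mcurve μc σc wc · a) (mcurveDeriv μc σc wc t a) t :=
    hasDerivAt_mcurve (fun k => (hμ k).differentiable one_ne_zero t)
      (fun k => (hσ k).differentiable one_ne_zero t) (fun k => (hw k).differentiable one_ne_zero t)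
      (fun k => hσpos k t) a
  have hentropy t₀ : HasDerivAt (fun t => ∫ a, mcurve μc σc wc t a * log (mcurve μc σc wc t a))
      (∫ a, mcurveDeriv μc σc wc t₀ a * log (mcurve μc σc wc t₀ a)) t₀ := by
    obtain ⟨g, A, hg, hm, hm', hlog⟩ := exists_envelope_mcurve hμ hσ hw hσpos hwpos hwsum t₀
    exact hasDerivAt_integral_mul_log (closedBall_mem_nhds t₀ one_pos)
      (fun t _ => continuous_mcurve.aestronglyMeasurable)
      continuous_mcurveDeriv.aestronglyMeasurable (fun t _ => hderiv t) (fun t _ => hpos t)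
      hm hm' hlog hg fun t _ => integral_mcurve (fun k => (hσpos k t).ne') (hwsum t)
  refine ⟨fun t => ?_, fun t => (hentropy t).neg.differentiableAt, fun t₀ => ?_⟩
  · obtain ⟨g, A, hg, hm, -, hlog⟩ := exists_envelope_mcurve hμ hσ hw hσpos hwpos hwsum t
    have ht : t ∈ closedBall t 1 := mem_closedBall_self zero_le_one
    exact integrable_mul_log continuous_mcurve.aestronglyMeasurable (hpos t) (hm t ht)
      (hlog t ht) hg
  · simp_rw [fun a => (hderiv t₀ a).deriv]
    exact (hentropy t₀).neg.deriv

/-- along a smooth curve of Gaussian mixtures, the differential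
entropy `H(t) = −∫ m_t(a)·log m_t(a) da` is finite (the integrand is
integrable), `t ↦ H(t)` is differentiable, and
`H′(t₀) = −∫ (∂m_t(a)/∂t)|_{t=t₀} · log m_{t₀}(a) da`. -/
theorem stmt9 (N : ℕ) (hN : 1 ≤ N) (μc σc wc : Fin N → ℝ → ℝ)
    (hμ : ∀ k, ContDiff ℝ 1 (μc k)) (hσ : ∀ k, ContDiff ℝ 1 (σc k))
    (hw : ∀ k, ContDiff ℝ 1 (wc k))
    (hσpos : ∀ k t, 0 < σc k t) (hwpos : ∀ k t, 0 < wc k t)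
    (hwsum : ∀ t, (∑ k, wc k t) = 1) :
    (∀ t : ℝ, Integrable (fun a => mcurve μc σc wc t a * Real.log (mcurve μc σc wc t a))) ∧
    Differentiable ℝ (fun t => -∫ a, mcurve μc σc wc t a * Real.log (mcurve μc σc wc t a)) ∧
    ∀ t₀ : ℝ,
      deriv (fun t => -∫ a, mcurve μc σc wc t a * Real.log (mcurve μc σc wc t a)) t₀
        = -∫ a, deriv (fun t => mcurve μc σc wc t a) t₀ * Real.log (mcurve μc σc wc t₀ a) :=
  stmt9_general N μc σc wc hμ hσ hw hσpos hwpos hwsum
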